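/- Let F be a field, (V_n)_{n∈ℤ} finite-dimensional F-vector spaces, and f_n : V_n → V_{n−1} linear maps such that, for some integer N, f_n is surjective for all n > N and injective for all n < N. Then the quotient 𝔸/𝕂 (inverse limit modulo eventually-zero sequences) is finite-dimensional, with dimension equal to dim(range(f_N ∘ f_{N+1})) ≤ min(dim V_{N+1}, dim V_{N−1}). -/

import Mathlib

/-!
Evaluation at `N - 1` identifies `𝔸 / 𝕂` with the range of `f N ∘ f (N + 1)`.
Its kernel is `𝕂`: a compatible sequence vanishing at `N - 1` vanishes below it, since the maps
carry zero to zero, and one vanishing far down vanishes up to `N - 1` by injectivity below `N`.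
Its image is that range: the term at `N - 1` is the image of the term at `N + 1`, and every vector
of `V (N + 1)` is the term of some compatible sequence, continued upward through preimages of the
surjective maps.
-/

open Function

/-- The canonical linear map `V a →ₗ[F] V b` induced by an equality `a = b`. -/
def castLinearMap (F : Type*) [Field F] {ι : Type*} (V : ι → Type*)
    [∀ i, AddCommGroup (V i)] [∀ i, Module F (V i)] {a b : ι} (h : a = b) :
    V a →ₗ[F] V b := by subst h; exact LinearMap.id

lemma castLinearMap_apply_apply (F : Type*) [Field F] {ι : Type*} (V : ι → Type*)
    [∀ i, AddCommGroup (V i)] [∀ i, Module F (V i)] {a b : ι} (h : a = b) (x : ∀ i, V i) :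
    castLinearMap F V h (x a) = x b := by
  subst h; rfl

section Semiring

variable {R : Type*} [Semiring R] {V : ℤ → Type*} [∀ n, AddCommMonoid (V n)]
  [∀ n, Module R (V n)] (f : (n : ℤ) → V n →ₗ[R] V (n - 1))

def invLimit : Submodule R (∀ n, V n) where
  carrier := {x | ∀ n, x (n - 1) = f n (x n)}
  add_mem' hx hy n := by simp [hx n, hy n]
  zero_mem' n := by simp
  smul_mem' c x hx n := by simp [hx n]

variable {f}

theorem mem_invLimit {x : ∀ n, V n} : x ∈ invLimit f ↔ ∀ n, x (n - 1) = f n (x n) :=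
  Iff.rfl

namespace invLimit

variable {x : ∀ n, V n}

theorem apply_eq_zero_of_le (hx : x ∈ invLimit f) {m : ℤ} (hm : x m = 0) :
    ∀ n ≤ m, x n = 0 := by
  intro n hn
  induction n, hn using Int.leInductionDown with
  | base => exact hm
  | pred n _ ih => rw [hx n, ih, map_zero]

theorem apply_eq_zero_of_injective {m : ℤ} (hinj : ∀ n ≤ m, Injective (f n))
    (hx : x ∈ invLimit f) {M : ℤ} (hM : ∀ n ≤ M, x n = 0) : x m = 0 := by
  rcases le_or_gt m M with hmM | hMm
  · exact hM m hmM
  suffices ∀ n, M ≤ n → n ≤ m → x n = 0 from this m hMm.le le_rfl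
  intro n hn
  induction n, hn using Int.leInduction with
  | base => exact fun _ => hM M le_rfl
  | succ n _ ih =>
    intro hnm
    apply hinj (n + 1) hnm
    rw [← hx (n + 1), map_zero, add_sub_cancel_right, ih (by omega)]

end invLimit

end Semiring

section Field

variable {F : Type*} [Field F] {V : ℤ → Type*} [∀ n, AddCommGroup (V n)]
  [∀ n, Module F (V n)] {f : (n : ℤ) → V n →ₗ[F] V (n - 1)}

namespace invLimit

theorem exists_apply_eq {b : ℤ} (hsurj : ∀ n > b, Surjective (f n)) (v : V b) :
    ∃ x ∈ invLimit f, x b = v := by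
  have hlift : ∀ k ≥ b, ∀ w : V (k + 1 - 1), ∃ y, f (k + 1) y = w :=
    fun k hk => hsurj (k + 1) (by omega)
  choose lift hlift using hlift
  let x : ∀ n, V n := fun n => n.inductionOn' b v
    (fun k hk y => lift k hk (castLinearMap F V (add_sub_cancel_right k 1).symm y))
    (fun k _ y => f k y)
  refine ⟨x, fun n => ?_, Int.inductionOn'_self⟩
  rcases le_or_gt n b with hnb | hbn
  · exact Int.inductionOn'_sub_one hnb
  · obtain ⟨k, rfl⟩ : ∃ k, n = k + 1 := ⟨n - 1, by ring⟩
    have hk : b ≤ k := by omega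
    change _ = f (k + 1) (Int.inductionOn' (k + 1) b _ _ _)
    rw [Int.inductionOn'_add_one hk, hlift]
    exact (castLinearMap_apply_apply F V _ x).symm

end invLimit

variable (f) in
def twoStepMap (N : ℤ) : V (N + 1) →ₗ[F] V (N - 1) :=
  (f N).comp ((castLinearMap F V (show N + 1 - 1 = N by ring)).comp (f (N + 1)))

namespace invLimit

variable (f) in
def eval (m : ℤ) : invLimit f →ₗ[F] V m :=
  (LinearMap.proj m).comp (invLimit f).subtype

theorem apply_sub_one_eq_twoStepMap {x : ∀ n, V n} (hx : x ∈ invLimit f) (N : ℤ) :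
    x (N - 1) = twoStepMap f N (x (N + 1)) := by
  rw [hx N, ← castLinearMap_apply_apply F V (show N + 1 - 1 = N by ring) x, hx (N + 1)]
  rfl

theorem mem_ker_eval_iff {m : ℤ} (hinj : ∀ n ≤ m, Injective (f n)) (x : invLimit f) :
    x ∈ LinearMap.ker (eval f m) ↔ ∃ M : ℤ, ∀ n ≤ M, (x : ∀ n, V n) n = 0 :=
  ⟨fun hx => ⟨m, apply_eq_zero_of_le x.2 hx⟩,
    fun ⟨_, hM⟩ => apply_eq_zero_of_injective hinj x.2 hM⟩

theorem range_eval_sub_one {N : ℤ} (hsurj : ∀ n > N + 1, Surjective (f n)) :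
    LinearMap.range (eval f (N - 1)) = LinearMap.range (twoStepMap f N) := by
  ext w
  constructor
  · rintro ⟨x, rfl⟩
    exact ⟨x.1 (N + 1), (apply_sub_one_eq_twoStepMap x.2 N).symm⟩
  · rintro ⟨v, rfl⟩
    obtain ⟨x, hx, rfl⟩ := exists_apply_eq hsurj v
    exact ⟨⟨x, hx⟩, apply_sub_one_eq_twoStepMap hx N⟩

end invLimit

end Field

/-- With finite-dimensional terms, surjectivity above `N` and injectivity
below `N`, the quotient `𝔸/𝕂` is finite-dimensional of dimension equal to the
rank of `f N ∘ f (N+1)`, which is at most `min (dim V (N+1)) (dim V (N-1))`. -/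
theorem stmt11 (F : Type*) [Field F] (V : ℤ → Type*)
    [∀ n, AddCommGroup (V n)] [∀ n, Module F (V n)]
    [∀ n, FiniteDimensional F (V n)]
    (f : (n : ℤ) → V n →ₗ[F] V (n - 1)) (N : ℤ)
    (hsurj : ∀ n > N, Function.Surjective (f n))
    (hinj : ∀ n < N, Function.Injective (f n))
    (A : Submodule F (∀ n, V n))
    (hA : ∀ x, x ∈ A ↔ ∀ n, x (n - 1) = f n (x n))
    (K : Submodule F A)
    (hK : ∀ x : A, x ∈ K ↔ ∃ M : ℤ, ∀ n ≤ M, (x : ∀ n, V n) n = 0) :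
    FiniteDimensional F (A ⧸ K) ∧
    Module.finrank F (A ⧸ K) =
      Module.finrank F (LinearMap.range ((f N).comp
        ((castLinearMap F V (show N + 1 - 1 = N by ring)).comp (f (N + 1))))) ∧
    Module.finrank F (LinearMap.range ((f N).comp
        ((castLinearMap F V (show N + 1 - 1 = N by ring)).comp (f (N + 1))))) ≤
      min (Module.finrank F (V (N + 1))) (Module.finrank F (V (N - 1))) := by
  obtain rfl : A = invLimit f := SetLike.ext fun x => (hA x).trans mem_invLimit.symm
  have hK_eq : K = LinearMap.ker (invLimit.eval f (N - 1)) := by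
    ext x
    rw [hK, invLimit.mem_ker_eval_iff fun n hn => hinj n (by omega)]
  let e : (invLimit f ⧸ K) ≃ₗ[F] LinearMap.range (twoStepMap f N) :=
    ((Submodule.quotEquivOfEq _ _ hK_eq).trans (invLimit.eval f (N - 1)).quotKerEquivRange).trans
      (LinearEquiv.ofEq _ _ (invLimit.range_eval_sub_one fun n hn => hsurj n (by omega)))
  exact ⟨Module.Finite.equiv e.symm, e.finrank_eq,
    le_min (LinearMap.finrank_range_le _) (Submodule.finrank_le _)⟩
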